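/- arXiv:2106.09387 — 5 statements merged into one kernel-verified Lean document; each statement's English description precedes it below -/
import Mathlib

section
/- Let β ∈ ℝ^p and let 𝓑 = {β' ∈ ℝ^p : β' ≥ 0 componentwise, ‖β'‖₁ ≤ b} for some b > 0. Then the Euclidean (ℓ₂) projection β̃ of β onto 𝓑 satisfies β̃ᵢ = max(βᵢ - γ, 0) for all i, where γ = inf{γ ≥ 0 : Σᵢ max(βᵢ - γ, 0) ≤ b}. -/
/-!
The soft-thresholded point `x = (max (βᵢ - γ) 0)ᵢ` lies in `𝓑`, and it satisfies the variational
inequality `⟪β - x, y - x⟫ ≤ 0` for every `y ∈ 𝓑`: coordinatewise `βᵢ - xᵢ ≤ γ` with equality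
where `xᵢ > 0`, so the inner product is at most `γ (Σ yᵢ - Σ xᵢ)`, which is nonpositive because
either `γ = 0` or the constraint is active, `Σ xᵢ = b`. The variational inequality makes `x` the
unique nearest point of `𝓑` to `β`.
-/

open Filter Topology InnerProductSpace

section Projection

variable {E : Type*} [NormedAddCommGroup E] [InnerProductSpace ℝ E]

theorem eq_of_norm_sub_le_of_real_inner_le_zero {u x z : E}
    (hinner : ⟪u - x, z - x⟫_ℝ ≤ 0) (hle : ‖u - z‖ ≤ ‖u - x‖) : z = x := by
  have hexpand : ‖u - z‖ ^ 2 = ‖u - x‖ ^ 2 - 2 * ⟪u - x, z - x⟫_ℝ + ‖z - x‖ ^ 2 := by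
    rw [← norm_sub_sq_real, sub_sub_sub_cancel_right]
  have hsq : ‖u - z‖ ^ 2 ≤ ‖u - x‖ ^ 2 := pow_le_pow_left₀ (norm_nonneg _) hle 2
  have : ‖z - x‖ ^ 2 ≤ 0 := by linarith
  rw [← sub_eq_zero, ← norm_eq_zero]
  exact pow_eq_zero_iff two_ne_zero |>.mp (le_antisymm this (sq_nonneg _))

end Projection

section Threshold

theorem isClosed_setOf_nonneg_and_le {f : ℝ → ℝ} (hf : Continuous f) (b : ℝ) :
    IsClosed {g : ℝ | 0 ≤ g ∧ f g ≤ b} :=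
  (isClosed_le continuous_const continuous_id).inter (isClosed_le hf continuous_const)

theorem le_apply_sInf_of_pos {f : ℝ → ℝ} (hf : Continuous f) {b : ℝ}
    (hpos : 0 < sInf {g : ℝ | 0 ≤ g ∧ f g ≤ b}) :
    b ≤ f (sInf {g : ℝ | 0 ≤ g ∧ f g ≤ b}) := by
  set γ := sInf {g : ℝ | 0 ≤ g ∧ f g ≤ b}
  have hbdd : BddBelow {g : ℝ | 0 ≤ g ∧ f g ≤ b} := ⟨0, fun _ hg => hg.1⟩
  have hviolated : ∀ᶠ g in 𝓝[<] γ, b ≤ f g := by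
    filter_upwards [Ico_mem_nhdsLT hpos] with g hg
    by_contra! hlt
    exact notMem_of_lt_csInf hg.2 hbdd ⟨hg.1, hlt.le⟩
  exact ge_of_tendsto (hf.continuousWithinAt (s := Set.Iio γ)) hviolated

variable {ι : Type*} [Fintype ι]

theorem continuous_sum_max_sub (a : ι → ℝ) : Continuous fun g : ℝ => ∑ i, max (a i - g) 0 := by
  fun_prop

theorem sInf_mem_setOf_sum_max_sub_le (a : ι → ℝ) {b : ℝ} (hb : 0 ≤ b) :
    sInf {g : ℝ | 0 ≤ g ∧ ∑ i, max (a i - g) 0 ≤ b} ∈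
      {g : ℝ | 0 ≤ g ∧ ∑ i, max (a i - g) 0 ≤ b} := by
  refine (isClosed_setOf_nonneg_and_le (continuous_sum_max_sub a) b).csInf_mem ?_
    ⟨0, fun _ hg => hg.1⟩
  have hle : ∀ i, a i ≤ ∑ j, max (a j) 0 := fun i =>
    (le_max_left _ _).trans <| Finset.single_le_sum (f := fun j => max (a j) 0)
      (fun j _ => le_max_right _ _) (Finset.mem_univ i)
  refine ⟨∑ j, max (a j) 0, Finset.sum_nonneg fun j _ => le_max_right _ _, ?_⟩
  rw [Finset.sum_eq_zero fun i _ => max_eq_right (sub_nonpos.2 (hle i))]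
  exact hb

end Threshold

section SoftThreshold

variable {ι : Type*}

noncomputable def softThreshold (β : EuclideanSpace ℝ ι) (γ : ℝ) : EuclideanSpace ℝ ι :=
  WithLp.toLp 2 fun i => max (β i - γ) 0

@[simp]
theorem softThreshold_apply (β : EuclideanSpace ℝ ι) (γ : ℝ) (i : ι) :
    softThreshold β γ i = max (β i - γ) 0 :=
  rfl

theorem sub_max_sub_mul_le (a γ : ℝ) {y : ℝ} (hy : 0 ≤ y) :
    (a - max (a - γ) 0) * (y - max (a - γ) 0) ≤ γ * (y - max (a - γ) 0) := by
  rcases le_or_gt γ a with h | h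
  · rw [max_eq_left (sub_nonneg.2 h), sub_sub_cancel]
  · rw [max_eq_right (sub_nonpos.2 h.le), sub_zero, sub_zero]
    exact mul_le_mul_of_nonneg_right h.le hy

theorem real_inner_sub_softThreshold_le [Fintype ι] (β y : EuclideanSpace ℝ ι) (γ : ℝ) (hy : ∀ i, 0 ≤ y i) :
    ⟪β - softThreshold β γ, y - softThreshold β γ⟫_ℝ ≤
      γ * (∑ i, y i - ∑ i, max (β i - γ) 0) := by
  rw [PiLp.inner_apply, ← Finset.sum_sub_distrib, Finset.mul_sum]
  refine Finset.sum_le_sum fun i _ => ?_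
  simpa [mul_comm] using sub_max_sub_mul_le (β i) γ (hy i)

end SoftThreshold

/-- The Euclidean projection of `β` onto the intersection of the nonnegative orthant with the
`ℓ¹`-ball of radius `b` is given coordinatewise by soft-thresholding:
`β̃ᵢ = max (βᵢ - γ) 0` where `γ = inf {g ≥ 0 : Σᵢ max (βᵢ - g) 0 ≤ b}`. -/
theorem stmt_1 {p : ℕ} (b : ℝ) (hb : 0 < b) (β : EuclideanSpace ℝ (Fin p))
    (B : Set (EuclideanSpace ℝ (Fin p)))
    (hB : B = {β' : EuclideanSpace ℝ (Fin p) | (∀ i, 0 ≤ β' i) ∧ ∑ i, |β' i| ≤ b})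
    (γ : ℝ)
    (hγ : γ = sInf {g : ℝ | 0 ≤ g ∧ ∑ i, max (β i - g) 0 ≤ b})
    (βt : EuclideanSpace ℝ (Fin p))
    (hmem : βt ∈ B)
    (hproj : ∀ y ∈ B, ‖β - βt‖ ≤ ‖β - y‖) :
    ∀ i, βt i = max (β i - γ) 0 := by
  subst hB
  obtain ⟨hγ0, hfeasible⟩ := hγ ▸ sInf_mem_setOf_sum_max_sub_le (β ·) hb.le
  have hactive : 0 < γ → b ≤ ∑ i, max (β i - γ) 0 := fun hpos =>
    hγ ▸ le_apply_sInf_of_pos (continuous_sum_max_sub (β ·)) (hγ ▸ hpos)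
  have habs : ∀ y : EuclideanSpace ℝ (Fin p), (∀ i, 0 ≤ y i) → ∑ i, |y i| = ∑ i, y i :=
    fun y hy => Finset.sum_congr rfl fun i _ => abs_of_nonneg (hy i)
  have hx : softThreshold β γ ∈ {β' : EuclideanSpace ℝ (Fin p) | (∀ i, 0 ≤ β' i) ∧ ∑ i, |β' i| ≤ b} :=
    ⟨fun i => le_max_right _ _, by rw [habs _ fun i => le_max_right _ _]; exact hfeasible⟩
  have hinner : ⟪β - softThreshold β γ, βt - softThreshold β γ⟫_ℝ ≤ 0 := by
    refine (real_inner_sub_softThreshold_le β βt γ hmem.1).trans ?_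
    have hβt : ∑ i, βt i ≤ b := habs βt hmem.1 ▸ hmem.2
    rcases hγ0.eq_or_lt with h | h
    · simp [← h]
    · exact mul_nonpos_of_nonneg_of_nonpos hγ0 (by linarith [hactive h])
  intro i
  rw [eq_of_norm_sub_le_of_real_inner_le_zero hinner (hproj _ hx), softThreshold_apply]
end

section
/- Let H be a Hilbert space and let Σ, Σ̄ be bounded self-adjoint nonnegative operators on H; let λ > 0. Then ‖I − (Σ + λI)^{1/2} (Σ̄ + λI)⁻¹ (Σ + λI)^{1/2}‖_op ≤ (1/λ) ‖Σ̄ − Σ‖_op. -/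
/-!
Write `X = S + λ = R²`, `Y = S̄ + λ = B⁻¹` and `c = ‖S̄ - S‖ / λ`. Since `X, Y ≥ λ`, the form bound
`|⟪(S̄ - S) v, v⟫| ≤ c λ ‖v‖²` gives `X ≤ (1 + c) Y` and `Y ≤ (1 + c) X`. The variational formula
`⟪B g, g⟫ = max_h (2 ⟪g, h⟫ - ⟪Y h, h⟫)` turns these into `1 / (1 + c) ≤ R B R ≤ 1 + c` (the lower
bound needs `R` onto, which holds as `R² ≥ λ`), so the self-adjoint operator `1 - R B R` has
numerical range in `[-c, c]`, hence norm at most `c`.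
-/

open scoped RealInnerProductSpace

theorem IsSelfAdjoint.of_mul_eq_one {M : Type*} [Monoid M] [StarMul M] {y b : M}
    (hy : IsSelfAdjoint y) (hyb : y * b = 1) : IsSelfAdjoint b := by
  have hby : star b * y = 1 := by rw [← hy.star_eq, ← star_mul, hyb, star_one]
  exact left_inv_eq_right_inv hby hyb

namespace ContinuousLinearMap

variable {H : Type*} [NormedAddCommGroup H] [InnerProductSpace ℝ H]

theorem opNorm_le_of_abs_inner_self_le {T : H →L[ℝ] H} (hT : (T : H →ₗ[ℝ] H).IsSymmetric)
    {c : ℝ} (hc : 0 ≤ c) (h : ∀ x, |⟪T x, x⟫| ≤ c * ‖x‖ ^ 2) : ‖T‖ ≤ c := by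
  rw [T.norm_eq_iSup_rayleighQuotient hT]
  refine ciSup_le fun x => ?_
  rcases eq_or_ne x 0 with rfl | hx
  · simpa [rayleighQuotient] using hc
  · rw [rayleighQuotient, reApplyInnerSelf_apply, RCLike.re_to_real, abs_div, abs_sq,
      div_le_iff₀ (by positivity)]
    exact h x

theorem inner_add_smul_id_apply (S : H →L[ℝ] H) (lam : ℝ) (v : H) :
    ⟪(S + lam • ContinuousLinearMap.id ℝ H) v, v⟫ = ⟪S v, v⟫ + lam * ‖v‖ ^ 2 := by
  rw [add_apply, smul_apply, coe_id', id_eq, inner_add_left, real_inner_smul_left,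
    real_inner_self_eq_norm_sq]

theorem inner_add_smul_id_le (S S' : H →L[ℝ] H) (hS' : ∀ v, 0 ≤ ⟪S' v, v⟫) {lam : ℝ}
    (hlam : 0 < lam) (v : H) :
    ⟪(S + lam • ContinuousLinearMap.id ℝ H) v, v⟫ ≤
      (1 + ‖S - S'‖ / lam) * ⟪(S' + lam • ContinuousLinearMap.id ℝ H) v, v⟫ := by
  have hdiff : ⟪S v, v⟫ - ⟪S' v, v⟫ ≤ ‖S - S'‖ * ‖v‖ ^ 2 :=
    calc ⟪S v, v⟫ - ⟪S' v, v⟫ = ⟪(S - S') v, v⟫ := by rw [sub_apply, inner_sub_left]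
      _ ≤ ‖(S - S') v‖ * ‖v‖ := real_inner_le_norm _ _
      _ ≤ ‖S - S'‖ * ‖v‖ * ‖v‖ := by gcongr; exact le_opNorm _ _
      _ = ‖S - S'‖ * ‖v‖ ^ 2 := by ring
  have hS'v : 0 ≤ ‖S - S'‖ / lam * ⟪S' v, v⟫ := mul_nonneg (by positivity) (hS' v)
  have hcancel : ‖S - S'‖ / lam * (lam * ‖v‖ ^ 2) = ‖S - S'‖ * ‖v‖ ^ 2 := by field_simp
  rw [inner_add_smul_id_apply, inner_add_smul_id_apply]
  linarith

variable {Y B R : H →L[ℝ] H}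

/-- Equality holds at `h = B g`, so `⟪B g, g⟫` is the maximum of `h ↦ 2 ⟪g, h⟫ - ⟪Y h, h⟫`. -/
theorem two_inner_sub_inner_le_inner_of_mul_eq_one (hY : Y.IsPositive) (hYB : Y * B = 1)
    (g h : H) : 2 * ⟪g, h⟫ - ⟪Y h, h⟫ ≤ ⟪B g, g⟫ := by
  have hg : Y (B g) = g := DFunLike.congr_fun hYB g
  have hpos := hY.inner_nonneg_left (h - B g)
  rw [map_sub, hg, inner_sub_left, inner_sub_right, inner_sub_right,
    hY.inner_left_eq_inner_right h (B g), hg] at hpos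
  linarith [real_inner_comm g h, real_inner_comm (B g) g]

theorem inner_conj_le (hYB : Y * B = 1)
    (hR : (R : H →ₗ[ℝ] H).IsSymmetric) {k : ℝ} (hk : 0 < k)
    (hRY : ∀ v, ‖R v‖ ^ 2 ≤ k * ⟪Y v, v⟫) (f : H) : ⟪B (R f), R f⟫ ≤ k * ‖f‖ ^ 2 := by
  set h := B (R f)
  have hYh : Y h = R f := DFunLike.congr_fun hYB (R f)
  have ha_Y : ⟪h, R f⟫ = ⟪Y h, h⟫ := by rw [hYh, real_inner_comm]
  have ha_R : ⟪h, R f⟫ = ⟪f, R h⟫ := (real_inner_comm _ _).trans (hR f h)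
  have hcs : ⟪f, R h⟫ ≤ ‖f‖ * ‖R h‖ := real_inner_le_norm _ _
  have hk_mul : k * ⟪h, R f⟫ ≤ k * (k * ‖f‖ ^ 2) := by
    nlinarith [hRY h, sq_nonneg (k * ‖f‖ - ‖R h‖), mul_le_mul_of_nonneg_left hcs hk.le]
  exact le_of_mul_le_mul_left hk_mul hk

theorem le_inner_conj (hY : Y.IsPositive) (hYB : Y * B = 1)
    (hR : (R : H →ₗ[ℝ] H).IsSymmetric) (hR_surj : Function.Surjective R) {k : ℝ} (hk : 0 < k)
    (hYR : ∀ v, ⟪Y v, v⟫ ≤ k * ‖R v‖ ^ 2) (f : H) : ‖f‖ ^ 2 ≤ k * ⟪B (R f), R f⟫ := by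
  obtain ⟨u, rfl⟩ := hR_surj f
  have hvar := two_inner_sub_inner_le_inner_of_mul_eq_one hY hYB (R (R u)) (k⁻¹ • u)
  have hRu : ⟪R (R u), u⟫ = ‖R u‖ ^ 2 := (hR (R u) u).trans (real_inner_self_eq_norm_sq _)
  rw [real_inner_smul_right, map_smul, real_inner_smul_left, real_inner_smul_right, hRu] at hvar
  field_simp at hvar
  nlinarith [hYR u]

variable [CompleteSpace H]

theorem _root_.IsSelfAdjoint.surjective_of_bounded_below (hR : IsSelfAdjoint R) {lam : ℝ}
    (hlam : 0 < lam) (h : ∀ v, lam * ‖v‖ ^ 2 ≤ ‖R v‖ ^ 2) : Function.Surjective R := by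
  have hRR : IsUnit (R * R) := by
    refine isUnit_of_forall_le_norm_inner_map _ (Real.toNNReal_pos.mpr hlam) fun v => ?_
    have hRRv : ⟪(R * R) v, v⟫ = ‖R v‖ ^ 2 :=
      (hR.isSymmetric (R v) v).trans (real_inner_self_eq_norm_sq _)
    rw [hRRv, Real.coe_toNNReal _ hlam.le, Real.norm_of_nonneg (by positivity), mul_comm]
    exact h v
  exact Function.Surjective.of_comp (isUnit_iff_bijective.mp hRR).2

theorem norm_one_sub_conj_le (hY : Y.IsPositive) (hYB : Y * B = 1) (hR : IsSelfAdjoint R)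
    (hR_surj : Function.Surjective R) {c : ℝ} (hc : 0 ≤ c)
    (hRY : ∀ v, ‖R v‖ ^ 2 ≤ (1 + c) * ⟪Y v, v⟫) (hYR : ∀ v, ⟪Y v, v⟫ ≤ (1 + c) * ‖R v‖ ^ 2) :
    ‖1 - R * B * R‖ ≤ c := by
  have hB : IsSelfAdjoint B := hY.isSelfAdjoint.of_mul_eq_one hYB
  have hT : IsSelfAdjoint (1 - R * B * R) := .sub (.one _) (hB.conjugate_self hR)
  refine opNorm_le_of_abs_inner_self_le hT.isSymmetric hc fun f => ?_
  have hform : ⟪(1 - R * B * R) f, f⟫ = ‖f‖ ^ 2 - ⟪B (R f), R f⟫ := by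
    change ⟪f - R (B (R f)), f⟫ = _
    rw [inner_sub_left, real_inner_self_eq_norm_sq, sub_right_inj]
    exact hR.isSymmetric _ _
  have hup := inner_conj_le hYB hR.isSymmetric (by positivity) hRY f
  have hlow := le_inner_conj hY hYB hR.isSymmetric hR_surj (by positivity) hYR f
  rw [hform, abs_le]
  constructor <;> nlinarith [sq_nonneg ‖f‖]

end ContinuousLinearMap

theorem stmt_10_general {H : Type*} [NormedAddCommGroup H] [InnerProductSpace ℝ H] [CompleteSpace H]
    (S Sb : H →L[ℝ] H) (hSb : IsSelfAdjoint Sb)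
    (hSpos : ∀ f : H, 0 ≤ ⟪S f, f⟫) (hSbpos : ∀ f : H, 0 ≤ ⟪Sb f, f⟫)
    (lam : ℝ) (hlam : 0 < lam)
    (R : H →L[ℝ] H) (hR : IsSelfAdjoint R)
    (hRsq : R ∘L R = S + lam • ContinuousLinearMap.id ℝ H)
    (B : H →L[ℝ] H)
    (hB₂ : (Sb + lam • ContinuousLinearMap.id ℝ H) ∘L B = ContinuousLinearMap.id ℝ H) :
    ‖ContinuousLinearMap.id ℝ H - R ∘L B ∘L R‖ ≤ (1 / lam) * ‖Sb - S‖ := by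
  have hRnorm (v : H) : ‖R v‖ ^ 2 = ⟪(S + lam • ContinuousLinearMap.id ℝ H) v, v⟫ := by
    rw [← hRsq, ContinuousLinearMap.comp_apply]
    exact ((hR.isSymmetric (R v) v).trans (real_inner_self_eq_norm_sq _)).symm
  have hY : (Sb + lam • ContinuousLinearMap.id ℝ H).IsPositive :=
    .add (ContinuousLinearMap.isPositive_def'.mpr
        ⟨hSb, by simpa [ContinuousLinearMap.reApplyInnerSelf_apply] using hSbpos⟩)
      (ContinuousLinearMap.isPositive_id.smul_of_nonneg hlam.le)
  have hR_surj : Function.Surjective R := hR.surjective_of_bounded_below hlam fun v => by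
    rw [hRnorm, ContinuousLinearMap.inner_add_smul_id_apply]
    linarith [hSpos v]
  rw [one_div_mul_eq_div]
  have key := ContinuousLinearMap.norm_one_sub_conj_le hY hB₂ hR hR_surj
    (c := ‖Sb - S‖ / lam) (by positivity)
    (fun v => by
      rw [hRnorm, norm_sub_rev]
      exact ContinuousLinearMap.inner_add_smul_id_le S Sb hSbpos hlam v)
    (fun v => by
      rw [hRnorm]
      exact ContinuousLinearMap.inner_add_smul_id_le Sb S hSpos hlam v)
  rw [mul_assoc] at key
  exact key

/-- Let `S, S̄` be bounded self-adjoint nonnegative operators on a real Hilbert space and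
`λ > 0`. If `R` is the self-adjoint nonnegative square root of `S + λI` and `B` the inverse
of `S̄ + λI`, then `‖I − R B R‖ ≤ (1/λ)‖S̄ − S‖`. -/
theorem stmt_10 {H : Type*} [NormedAddCommGroup H] [InnerProductSpace ℝ H] [CompleteSpace H]
    (S Sb : H →L[ℝ] H) (hS : IsSelfAdjoint S) (hSb : IsSelfAdjoint Sb)
    (hSpos : ∀ f : H, 0 ≤ ⟪S f, f⟫) (hSbpos : ∀ f : H, 0 ≤ ⟪Sb f, f⟫)
    (lam : ℝ) (hlam : 0 < lam)
    (R : H →L[ℝ] H) (hR : IsSelfAdjoint R) (hRpos : ∀ f : H, 0 ≤ ⟪R f, f⟫)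
    (hRsq : R ∘L R = S + lam • ContinuousLinearMap.id ℝ H)
    (B : H →L[ℝ] H)
    (hB₁ : B ∘L (Sb + lam • ContinuousLinearMap.id ℝ H) = ContinuousLinearMap.id ℝ H)
    (hB₂ : (Sb + lam • ContinuousLinearMap.id ℝ H) ∘L B = ContinuousLinearMap.id ℝ H) :
    ‖ContinuousLinearMap.id ℝ H - R ∘L B ∘L R‖ ≤ (1 / lam) * ‖Sb - S‖ :=
  stmt_10_general S Sb hSb hSpos hSbpos lam hlam R hR hRsq B hB₂
end

section
/- Let (X, Y) be random variables with X taking values in ℝ^p. Among all subsets S ⊆ {1,…,p} satisfying (i) E[Y | X] = E[Y | X_S] almost surely and (ii) X_S is independent of X_{S^c}, there exists a unique minimal one: if A and B both satisfy (i), (ii), and neither has a strict subset satisfying (i) and (ii), then A = B. -/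
/-!
Call `S` a signal set if it satisfies (i) and (ii). `univ` is one, and signal sets are closed under
intersection; since there are finitely many, a minimal one exists, and two minimal ones `A`, `B`
both equal the signal set `A ∩ B`. For (i) at `A ∩ B`: `X_{A \ B}` is a function of `X_{Bᶜ}`,
hence independent of `X_B`, so adding it to `X_{A ∩ B}` does not change `E[E[Y | X_B] | ·]`; this
gives `E[Y | X_{A ∩ B}] = E[E[Y | X_B] | X_{A ∩ B}] = E[E[Y | X_B] | X_A] = E[Y | X_A]`.
For (ii): `X_{A ∩ B} ⟂ X_{A \ B}` (from `B`) and `X_A ⟂ X_{Aᶜ}` combine to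
`X_{A ∩ B} ⟂ (X_{A \ B}, X_{Aᶜ})`.
-/

open MeasureTheory ProbabilityTheory

namespace MeasurableSpace

variable {Ω : Type*}

lemma isPiSystem_image2_inter (m₁ m₂ : MeasurableSpace Ω) :
    IsPiSystem (Set.image2 (· ∩ ·) {s | MeasurableSet[m₁] s} {s | MeasurableSet[m₂] s}) := by
  rintro _ ⟨a, ha, b, hb, rfl⟩ _ ⟨c, hc, d, hd, rfl⟩ -
  exact ⟨a ∩ c, ha.inter hc, b ∩ d, hb.inter hd, Set.inter_inter_inter_comm a c b d⟩

lemma sup_eq_generateFrom_image2_inter (m₁ m₂ : MeasurableSpace Ω) :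
    m₁ ⊔ m₂ =
      generateFrom (Set.image2 (· ∩ ·) {s | MeasurableSet[m₁] s} {s | MeasurableSet[m₂] s}) := by
  refine le_antisymm (sup_le ?_ ?_) (generateFrom_le ?_)
  · exact fun s hs ↦ measurableSet_generateFrom ⟨s, hs, Set.univ, .univ, Set.inter_univ s⟩
  · exact fun s hs ↦ measurableSet_generateFrom ⟨Set.univ, .univ, s, hs, Set.univ_inter s⟩
  · rintro _ ⟨s, hs, t, ht, rfl⟩
    exact (le_sup_left (b := m₂) s hs).inter (le_sup_right (a := m₁) t ht)

end MeasurableSpace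

section Independence

variable {Ω E : Type*} [NormedAddCommGroup E] [NormedSpace ℝ E] [CompleteSpace E]
  {m₁ m₂ m₃ m0 : MeasurableSpace Ω} {μ : Measure Ω}

lemma indep_sup_right_of_indep_sup_left [IsZeroOrProbabilityMeasure μ] (h₁ : m₁ ≤ m0)
    (h₂ : m₂ ≤ m0) (h₃ : m₃ ≤ m0) (h12_3 : Indep (m₁ ⊔ m₂) m₃ μ) (h12 : Indep m₁ m₂ μ) :
    Indep m₁ (m₂ ⊔ m₃) μ := by
  have h23 : Indep m₂ m₃ μ := indep_of_indep_of_le_left h12_3 le_sup_right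
  rw [Indep_iff] at h12 h23 h12_3
  refine IndepSets.indep h₁ (sup_le h₂ h₃) (@MeasurableSpace.isPiSystem_measurableSet Ω m₁)
    (MeasurableSpace.isPiSystem_image2_inter m₂ m₃)
    (@MeasurableSpace.generateFrom_measurableSet Ω m₁).symm
    (MeasurableSpace.sup_eq_generateFrom_image2_inter m₂ m₃) ?_
  rw [IndepSets_iff]
  rintro s _ hs ⟨t₂, ht₂, t₃, ht₃, rfl⟩
  rw [← Set.inter_assoc, h12_3 _ _ ((le_sup_left (b := m₂) s hs).inter
    (le_sup_right (a := m₁) t₂ ht₂)) ht₃, h12 _ _ hs ht₂, h23 _ _ ht₂ ht₃, mul_assoc]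

lemma setIntegral_inter_eq_smul_of_indep [IsFiniteMeasure μ] (h₁ : m₁ ≤ m0) (h₃ : m₃ ≤ m0)
    (hind : Indep m₁ m₃ μ) {g : Ω → E} (hg : Integrable g μ) (hgm : StronglyMeasurable[m₁] g)
    {s t : Set Ω} (hs : MeasurableSet[m₁] s) (ht : MeasurableSet[m₃] t) :
    ∫ x in s ∩ t, g x ∂μ = μ.real t • ∫ x in s, g x ∂μ := by
  have hind_s : μ[s.indicator g | m₃] =ᵐ[μ] fun _ ↦ μ[s.indicator g] :=
    condExp_indep_eq h₁ h₃ (hgm.indicator hs) hind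
  calc ∫ x in s ∩ t, g x ∂μ
      = ∫ x in t, s.indicator g x ∂μ := by
        rw [setIntegral_indicator (h₁ _ hs), Set.inter_comm]
    _ = ∫ x in t, (μ[s.indicator g | m₃]) x ∂μ :=
        (setIntegral_condExp h₃ (hg.indicator (h₁ _ hs)) ht).symm
    _ = ∫ x in t, μ[s.indicator g] ∂μ :=
        setIntegral_congr_ae (h₃ _ ht) (hind_s.mono fun _ h _ ↦ h)
    _ = μ.real t • ∫ x in s, g x ∂μ := by rw [setIntegral_const, integral_indicator (h₁ _ hs)]

lemma condExp_sup_eq_of_indep [IsFiniteMeasure μ] (h21 : m₂ ≤ m₁) (h₁ : m₁ ≤ m0)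
    (h₃ : m₃ ≤ m0) {f : Ω → E} (hfm : StronglyMeasurable[m₁] f) (hind : Indep m₁ m₃ μ) :
    μ[f | m₂ ⊔ m₃] =ᵐ[μ] μ[f | m₂] := by
  by_cases hf : Integrable f μ
  swap; · simp only [condExp_of_not_integrable hf]; rfl
  have h₂ : m₂ ≤ m0 := h21.trans h₁
  have h23 : m₂ ⊔ m₃ ≤ m0 := sup_le h₂ h₃
  have hgm : StronglyMeasurable[m₁] (μ[f | m₂]) := stronglyMeasurable_condExp.mono h21
  have key (u : Set Ω) (hu : MeasurableSet[m₂ ⊔ m₃] u) :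
      ∫ x in u, (μ[f | m₂]) x ∂μ = ∫ x in u, f x ∂μ := by
    induction u, hu using MeasurableSpace.induction_on_inter
        (MeasurableSpace.sup_eq_generateFrom_image2_inter m₂ m₃)
        (MeasurableSpace.isPiSystem_image2_inter m₂ m₃) with
    | empty => simp
    | basic _ hu =>
      obtain ⟨s, hs, t, ht, rfl⟩ := hu
      rw [setIntegral_inter_eq_smul_of_indep h₁ h₃ hind hf hfm (h21 _ hs) ht,
        setIntegral_inter_eq_smul_of_indep h₁ h₃ hind integrable_condExp hgm (h21 _ hs) ht,
        setIntegral_condExp h₂ hf hs]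
    | compl u hu ih =>
      rw [setIntegral_compl (h23 _ hu) integrable_condExp, setIntegral_compl (h23 _ hu) hf, ih,
        integral_condExp h₂]
    | iUnion u hd hu ih =>
      rw [integral_iUnion (fun i ↦ h23 _ (hu i)) hd integrable_condExp.integrableOn,
        integral_iUnion (fun i ↦ h23 _ (hu i)) hd hf.integrableOn]
      exact tsum_congr ih
  exact (ae_eq_condExp_of_forall_setIntegral_eq h23 hf
    (fun _ _ _ ↦ integrable_condExp.integrableOn) (fun u hu _ ↦ key u hu)
    (stronglyMeasurable_condExp.mono (le_sup_left : m₂ ≤ m₂ ⊔ m₃)).aestronglyMeasurable).symm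

end Independence

section CoordinateSigmaAlgebras

variable {Ω ι β : Type*} [MeasurableSpace β] (X : Ω → ι → β)

abbrev coordSigma (S : Finset ι) : MeasurableSpace Ω :=
  MeasurableSpace.comap (fun ω (i : S) ↦ X ω i) inferInstance

lemma coordSigma_eq_biSup (S : Finset ι) :
    coordSigma X S = ⨆ i ∈ S, MeasurableSpace.comap (fun ω ↦ X ω i) inferInstance := by
  rw [coordSigma, MeasurableSpace.pi, MeasurableSpace.comap_iSup, iSup_subtype']
  simp_rw [MeasurableSpace.comap_comp]
  rfl

lemma coordSigma_union [DecidableEq ι] (S T : Finset ι) :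
    coordSigma X (S ∪ T) = coordSigma X S ⊔ coordSigma X T := by
  simp only [coordSigma_eq_biSup, Finset.iSup_union]

lemma coordSigma_mono [DecidableEq ι] {S T : Finset ι} (h : S ⊆ T) :
    coordSigma X S ≤ coordSigma X T := by
  rw [← Finset.union_eq_right.2 h, coordSigma_union]
  exact le_sup_left

lemma coordSigma_inter_sup_sdiff [DecidableEq ι] (A B : Finset ι) :
    coordSigma X (A ∩ B) ⊔ coordSigma X (A \ B) = coordSigma X A := by
  rw [← coordSigma_union]
  exact congrArg _ (sup_inf_sdiff A B)

lemma coordSigma_empty : coordSigma X ∅ = ⊥ := by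
  simp [coordSigma_eq_biSup]

lemma coordSigma_le [MeasurableSpace Ω] (hX : Measurable X) (S : Finset ι) :
    coordSigma X S ≤ ‹MeasurableSpace Ω› :=
  Measurable.comap_le <| measurable_pi_lambda _ fun i ↦ (measurable_pi_apply (i : ι)).comp hX

end CoordinateSigmaAlgebras

lemma Minimal.eq_of_inf_closed {α : Type*} [SemilatticeInf α] {P : α → Prop}
    (hP : ∀ a b, P a → P b → P (a ⊓ b)) {a b : α} (ha : Minimal P a) (hb : Minimal P b) :
    a = b :=
  have hab := hP a b ha.prop hb.prop
  (ha.eq_of_le hab inf_le_left).symm.trans (hb.eq_of_le hab inf_le_right)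

section SignalSets

variable {Ω ι β E : Type*} [MeasurableSpace Ω] [MeasurableSpace β] [Fintype ι]
  [DecidableEq ι] [NormedAddCommGroup E] [NormedSpace ℝ E]
  {μ : Measure Ω} [IsProbabilityMeasure μ] {X : Ω → ι → β} {Y : Ω → E}

variable (μ X Y) in
def IsSignalSet (S : Finset ι) : Prop :=
  μ[Y | coordSigma X S] =ᵐ[μ] μ[Y | coordSigma X Finset.univ] ∧
    Indep (coordSigma X S) (coordSigma X Sᶜ) μ

variable (μ X Y) in
lemma isSignalSet_univ : IsSignalSet μ X Y Finset.univ := by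
  refine ⟨.rfl, ?_⟩
  rw [Finset.compl_univ, coordSigma_empty]
  exact indep_bot_right _

lemma IsSignalSet.inter [CompleteSpace E] (hX : Measurable X) {A B : Finset ι}
    (hA : IsSignalSet μ X Y A) (hB : IsSignalSet μ X Y B) : IsSignalSet μ X Y (A ∩ B) := by
  have hle := coordSigma_le X hX
  have hindB : Indep (coordSigma X B) (coordSigma X (A \ B)) μ :=
    indep_of_indep_of_le_right hB.2
      (coordSigma_mono X fun _ hi ↦ Finset.mem_compl.2 (Finset.mem_sdiff.1 hi).2)
  constructor
  · have hdrop : μ[μ[Y | coordSigma X B] | coordSigma X A] =ᵐ[μ]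
        μ[μ[Y | coordSigma X B] | coordSigma X (A ∩ B)] := by
      rw [← coordSigma_inter_sup_sdiff]
      exact condExp_sup_eq_of_indep (coordSigma_mono X Finset.inter_subset_right) (hle B)
        (hle _) stronglyMeasurable_condExp hindB
    calc μ[Y | coordSigma X (A ∩ B)]
        =ᵐ[μ] μ[μ[Y | coordSigma X A] | coordSigma X (A ∩ B)] :=
          (condExp_condExp_of_le (coordSigma_mono X Finset.inter_subset_left) (hle A)).symm
      _ =ᵐ[μ] μ[μ[Y | coordSigma X B] | coordSigma X (A ∩ B)] :=
          condExp_congr_ae (hA.1.trans hB.1.symm)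
      _ =ᵐ[μ] μ[μ[Y | coordSigma X B] | coordSigma X A] := hdrop.symm
      _ =ᵐ[μ] μ[μ[Y | coordSigma X Finset.univ] | coordSigma X A] := condExp_congr_ae hB.1
      _ =ᵐ[μ] μ[Y | coordSigma X A] :=
          condExp_condExp_of_le (coordSigma_mono X (Finset.subset_univ A)) (hle _)
      _ =ᵐ[μ] μ[Y | coordSigma X Finset.univ] := hA.1
  · have hcompl : (A ∩ B)ᶜ = A \ B ∪ Aᶜ := by
      ext i
      simp only [Finset.mem_compl, Finset.mem_inter, Finset.mem_union, Finset.mem_sdiff]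
      tauto
    rw [hcompl, coordSigma_union]
    refine indep_sup_right_of_indep_sup_left (hle _) (hle _) (hle _) ?_ ?_
    · rw [coordSigma_inter_sup_sdiff]
      exact hA.2
    · exact indep_of_indep_of_le_left hindB (coordSigma_mono X Finset.inter_subset_right)

end SignalSets

theorem stmt_17_general {Ω : Type*} [MeasurableSpace Ω] (μ : Measure Ω) [IsProbabilityMeasure μ]
    {p : ℕ} (X : Ω → (Fin p → ℝ)) (Y : Ω → ℝ)
    (hX : Measurable X)
    (mS : Finset (Fin p) → MeasurableSpace Ω)
    (hmS : ∀ S : Finset (Fin p),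
      mS S = MeasurableSpace.comap (fun ω => fun i : S => X ω i) inferInstance)
    (good : Finset (Fin p) → Prop)
    (hgood : ∀ S : Finset (Fin p), good S ↔
      ((μ[Y | mS S] =ᵐ[μ] μ[Y | mS Finset.univ]) ∧ Indep (mS S) (mS Sᶜ) μ)) :
    (∃ S : Finset (Fin p), good S ∧ ∀ S' ⊂ S, ¬ good S') ∧
    (∀ A B : Finset (Fin p), good A → good B →
      (∀ A' ⊂ A, ¬ good A') → (∀ B' ⊂ B, ¬ good B') → A = B) := by
  obtain rfl : mS = coordSigma X := funext hmS
  obtain rfl : good = IsSignalSet μ X Y := funext fun S ↦ propext (hgood S)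
  obtain ⟨S, -, hS⟩ := exists_minimal_le_of_wellFoundedLT _ _ (isSignalSet_univ μ X Y)
  refine ⟨⟨S, minimal_iff_forall_lt.1 hS⟩, fun A B hA hB hAmin hBmin ↦ ?_⟩
  exact (minimal_iff_forall_lt.2 ⟨hA, hAmin⟩).eq_of_inf_closed
    (fun _ _ ↦ IsSignalSet.inter hX) (minimal_iff_forall_lt.2 ⟨hB, hBmin⟩)

/-- Existence and uniqueness of the minimal signal set (Markov blanket with independence).
Among subsets `S` of coordinates such that (i) `E[Y|X] = E[Y|X_S]` a.s. and
(ii) `X_S ⟂ X_{Sᶜ}`, there is a minimal one, and any two minimal such subsets coincide. -/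
theorem stmt_17 {Ω : Type*} [MeasurableSpace Ω] (μ : Measure Ω) [IsProbabilityMeasure μ]
    {p : ℕ} (X : Ω → (Fin p → ℝ)) (Y : Ω → ℝ)
    (hX : Measurable X) (hY : Integrable Y μ)
    (mS : Finset (Fin p) → MeasurableSpace Ω)
    (hmS : ∀ S : Finset (Fin p),
      mS S = MeasurableSpace.comap (fun ω => fun i : S => X ω i) inferInstance)
    (good : Finset (Fin p) → Prop)
    (hgood : ∀ S : Finset (Fin p), good S ↔
      ((μ[Y | mS S] =ᵐ[μ] μ[Y | mS Finset.univ]) ∧ Indep (mS S) (mS Sᶜ) μ)) :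
    (∃ S : Finset (Fin p), good S ∧ ∀ S' ⊂ S, ¬ good S') ∧
    (∀ A B : Finset (Fin p), good A → good B →
      (∀ A' ⊂ A, ¬ good A') → (∀ B' ⊂ B, ¬ good B') → A = B) :=
  stmt_17_general μ X Y hX mS hmS good hgood
end

section
/- Let p : ℝ → ℝ be an integrable function with ∫ p(x) dx = 0 and sufficient decay (e.g., compactly supported and bounded). Then ∬ p(x) p(x') |x − x'| dx dx' = −∫_ℝ |∫ p(x) e^{iωx} dx|² · dω/(π ω²). In particular, ∬ p(x)p(x')|x−x'| dx dx' ≤ 0. -/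
/-!
Integrating `(1 - cos (a ω)) / ω²` over `ℝ` gives `π |a|`, so
`π ∬ p(x) p(x') |x - x'| = ∭ p(x) p(x') (1 - cos ((x - x') ω)) / ω²`.
Integrating in `(x, x')` first instead (Fubini), `cos ((x - x') ω) = Re (e^{iωx} e^{-iωx'})` turns
the integrand into `((∫ p)² - |p̂(ω)|²) / ω²`, and the first term vanishes since `∫ p = 0`.

The value `∫ (1 - cos ω) / ω² = π` comes from writing `1 / ω² = ∫₀^∞ s e^{-ωs} ds` and
swapping the order of integration, which leaves `∫₀^∞ ds / (1 + s²) = π / 2` on each half-line.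
-/

open MeasureTheory Real Set Filter ComplexConjugate

lemma one_sub_cos_div_sq_nonneg (t ω : ℝ) : 0 ≤ (1 - cos t) / ω ^ 2 :=
  div_nonneg (sub_nonneg.2 (cos_le_one t)) (sq_nonneg ω)

lemma one_sub_cos_div_sq_le (ω : ℝ) : (1 - cos ω) / ω ^ 2 ≤ 4 / (1 + ω ^ 2) := by
  rcases eq_or_ne ω 0 with rfl | hω
  · norm_num
  rw [div_le_div_iff₀ (by positivity) (by positivity)]
  rcases le_total (ω ^ 2) 1 with hle | hge
  · nlinarith [one_sub_sq_div_two_le_cos (x := ω)]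
  · nlinarith [neg_one_le_cos ω]

lemma one_sub_cos_mul_div_sq_eq (a ω : ℝ) :
    (1 - cos (a * ω)) / ω ^ 2 = a ^ 2 * ((1 - cos (a * ω)) / (a * ω) ^ 2) := by
  rcases eq_or_ne a 0 with rfl | ha
  · simp
  rcases eq_or_ne ω 0 with rfl | hω
  · simp
  field_simp

lemma integrable_one_sub_cos_div_sq : Integrable fun ω : ℝ => (1 - cos ω) / ω ^ 2 := by
  refine (integrable_inv_one_add_sq.const_mul 4).mono'
    (by fun_prop : Measurable _).aestronglyMeasurable (ae_of_all _ fun ω => ?_)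
  rw [norm_of_nonneg (one_sub_cos_div_sq_nonneg ω ω), ← div_eq_mul_inv]
  exact one_sub_cos_div_sq_le ω

lemma integrable_one_sub_cos_mul_div_sq (a : ℝ) :
    Integrable fun ω : ℝ => (1 - cos (a * ω)) / ω ^ 2 := by
  rcases eq_or_ne a 0 with rfl | ha
  · simp
  simp_rw [one_sub_cos_mul_div_sq_eq a]
  exact (integrable_one_sub_cos_div_sq.comp_mul_left' ha).const_mul _

lemma integral_Ioi_mul_exp_neg_mul {ω : ℝ} (hω : 0 < ω) :
    ∫ s in Ioi (0 : ℝ), s * exp (-(ω * s)) = 1 / ω ^ 2 := by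
  have h := integral_rpow_mul_exp_neg_mul_Ioi two_pos hω
  norm_num [Gamma_two] at h
  simpa [div_pow] using h

lemma integral_Ioi_one_sub_cos_mul_exp_neg_mul {s : ℝ} (hs : 0 < s) :
    ∫ ω in Ioi (0 : ℝ), (1 - cos ω) * exp (-(s * ω)) = 1 / (s * (1 + s ^ 2)) := by
  have hre : ∀ ω : ℝ, (1 - cos ω) * exp (-(s * ω))
      = RCLike.re (Complex.exp ((-s : ℂ) * ω) - Complex.exp ((-s + Complex.I) * ω)) := by
    intro ω
    simp [Complex.exp_re]
    ring
  have h₁ : (-s : ℂ).re < 0 := by simpa using hs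
  have h₂ : (-s + Complex.I : ℂ).re < 0 := by simpa using hs
  have hint₁ := integrableOn_exp_mul_complex_Ioi h₁ 0
  have hint₂ := integrableOn_exp_mul_complex_Ioi h₂ 0
  simp_rw [hre]
  rw [integral_re, integral_sub hint₁ hint₂, integral_exp_mul_complex_Ioi h₁,
    integral_exp_mul_complex_Ioi h₂]
  · have hs₀ : s ≠ 0 := hs.ne'
    simp [Complex.div_re, Complex.normSq_apply]
    field_simp
    ring
  · exact hint₁.sub hint₂

lemma integral_Ioi_one_sub_cos_div_sq : ∫ ω in Ioi (0 : ℝ), (1 - cos ω) / ω ^ 2 = π / 2 := by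
  set μ := volume.restrict (Ioi (0 : ℝ))
  set g : ℝ → ℝ → ℝ := fun ω s => (1 - cos ω) * (s * exp (-(ω * s))) with hg_def
  have inner_s : ∀ ω ∈ Ioi (0 : ℝ), ∫ s, g ω s ∂μ = (1 - cos ω) / ω ^ 2 := fun ω hω => by
    rw [integral_const_mul, integral_Ioi_mul_exp_neg_mul hω, mul_one_div]
  have inner_ω : ∀ s ∈ Ioi (0 : ℝ), ∫ ω, g ω s ∂μ = 1 / (1 + s ^ 2) := fun s (hs : 0 < s) => by
    have hg : ∀ ω, g ω s = s * ((1 - cos ω) * exp (-(s * ω))) := fun ω => by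
      rw [hg_def, mul_comm s ω]; ring
    rw [integral_congr_ae (ae_of_all _ hg), integral_const_mul,
      integral_Ioi_one_sub_cos_mul_exp_neg_mul hs]
    field_simp [hs.ne']
  have hg : Integrable (Function.uncurry g) (μ.prod μ) := by
    refine (integrable_prod_iff (Continuous.aestronglyMeasurable (by fun_prop))).2 ⟨?_, ?_⟩
    · filter_upwards [ae_restrict_mem measurableSet_Ioi] with ω (hω : 0 < ω)
      have hint : IntegrableOn (fun s => s * exp (-(ω * s))) (Ioi 0) :=
        .of_integral_ne_zero (by rw [integral_Ioi_mul_exp_neg_mul hω]; simp [hω.ne'])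
      simpa only [Function.uncurry_apply_pair, hg_def] using hint.const_mul (1 - cos ω)
    · refine integrable_one_sub_cos_div_sq.integrableOn.congr_fun (fun ω hω => ?_)
        measurableSet_Ioi
      dsimp only
      rw [← inner_s ω hω]
      refine setIntegral_congr_fun measurableSet_Ioi fun s (hs : 0 < s) => ?_
      exact (norm_of_nonneg (mul_nonneg (sub_nonneg.2 (cos_le_one ω)) (by positivity))).symm
  calc ∫ ω in Ioi (0 : ℝ), (1 - cos ω) / ω ^ 2 = ∫ ω, ∫ s, g ω s ∂μ ∂μ :=
        (setIntegral_congr_fun measurableSet_Ioi inner_s).symm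
    _ = ∫ s, ∫ ω, g ω s ∂μ ∂μ := integral_integral_swap hg
    _ = ∫ s in Ioi (0 : ℝ), 1 / (1 + s ^ 2) := setIntegral_congr_fun measurableSet_Ioi inner_ω
    _ = π / 2 := by simp [integral_Ioi_inv_one_add_sq]

lemma integral_one_sub_cos_div_sq : ∫ ω : ℝ, (1 - cos ω) / ω ^ 2 = π := by
  have h := integral_comp_abs (f := fun ω : ℝ => (1 - cos ω) / ω ^ 2)
  simp only [cos_abs, sq_abs, integral_Ioi_one_sub_cos_div_sq] at h
  rw [h]
  ring

lemma integral_one_sub_cos_mul_div_sq (a : ℝ) :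
    ∫ ω : ℝ, (1 - cos (a * ω)) / ω ^ 2 = π * |a| := by
  rcases eq_or_ne a 0 with rfl | ha
  · simp
  simp_rw [one_sub_cos_mul_div_sq_eq a]
  rw [integral_const_mul, Measure.integral_comp_mul_left (fun t => (1 - cos t) / t ^ 2),
    integral_one_sub_cos_div_sq, smul_eq_mul, abs_inv, ← sq_abs]
  field_simp

lemma integrable_mul_exp_I_mul {p : ℝ → ℝ} (hp : Integrable p) (ω : ℝ) :
    Integrable fun x : ℝ => (p x : ℂ) * Complex.exp (Complex.I * ω * x) :=
  hp.ofReal.mul_bdd (c := 1) (by fun_prop) (ae_of_all _ fun x => by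
    rw [show Complex.I * ω * x = ((ω * x : ℝ) : ℂ) * Complex.I by push_cast; ring,
      Complex.norm_exp_ofReal_mul_I])

lemma norm_integral_mul_exp_I_mul_sq {p : ℝ → ℝ} (hp : Integrable p) (ω : ℝ) :
    ‖∫ x : ℝ, (p x : ℂ) * Complex.exp (Complex.I * ω * x)‖ ^ 2
      = ∫ z : ℝ × ℝ, p z.1 * p z.2 * cos ((z.1 - z.2) * ω) := by
  set f : ℝ → ℂ := fun x => (p x : ℂ) * Complex.exp (Complex.I * ω * x)
  have hf : Integrable f := integrable_mul_exp_I_mul hp ω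
  have hf' : Integrable fun x => conj (f x) :=
    (Complex.conjCLE.integrable_comp_iff (φ := f)).2 hf
  have hre : ∀ z : ℝ × ℝ, RCLike.re (f z.1 * conj (f z.2))
      = p z.1 * p z.2 * cos ((z.1 - z.2) * ω) := by
    intro z
    have : f z.1 * conj (f z.2)
        = ((p z.1 * p z.2 : ℝ) : ℂ) * Complex.exp (((z.1 - z.2) * ω : ℝ) * Complex.I) := by
      simp only [f, map_mul, Complex.conj_ofReal, ← Complex.exp_conj, Complex.conj_I]
      rw [mul_mul_mul_comm, ← Complex.exp_add]
      push_cast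
      ring_nf
    rw [this, RCLike.re_to_complex, Complex.re_ofReal_mul, Complex.exp_ofReal_mul_I_re]
  calc ‖∫ x, f x‖ ^ 2 = RCLike.re ((∫ x, f x) * conj (∫ x, f x)) := by
        rw [RCLike.mul_conj]; norm_cast
    _ = RCLike.re (∫ z : ℝ × ℝ, f z.1 * conj (f z.2)) := by
        rw [← integral_conj, Measure.volume_eq_prod, integral_prod_mul f fun y => conj (f y)]
    _ = _ := by
        rw [Measure.volume_eq_prod, ← integral_re (hf.mul_prod hf')]
        simp_rw [hre]

theorem pi_mul_integral_mul_mul_abs_sub {p : ℝ → ℝ} (hp : Integrable p)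
    (hq : Integrable fun z : ℝ × ℝ => p z.1 * p z.2 * |z.1 - z.2|) :
    π * ∫ z : ℝ × ℝ, p z.1 * p z.2 * |z.1 - z.2| =
      ∫ ω : ℝ, ((∫ x, p x) ^ 2
        - ‖∫ x : ℝ, (p x : ℂ) * Complex.exp (Complex.I * ω * x)‖ ^ 2) / ω ^ 2 := by
  set Φ : ℝ × ℝ → ℝ → ℝ := fun z ω => p z.1 * p z.2 * ((1 - cos ((z.1 - z.2) * ω)) / ω ^ 2)
    with hΦ_def
  have hpp : Integrable fun z : ℝ × ℝ => p z.1 * p z.2 := hp.mul_prod hp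
  have inner_ω : ∀ z, ∫ ω, Φ z ω = π * (p z.1 * p z.2 * |z.1 - z.2|) := fun z => by
    rw [hΦ_def, integral_const_mul, integral_one_sub_cos_mul_div_sq]
    ring
  have inner_z : ∀ ω, ∫ z, Φ z ω = ((∫ x, p x) ^ 2
      - ‖∫ x : ℝ, (p x : ℂ) * Complex.exp (Complex.I * ω * x)‖ ^ 2) / ω ^ 2 := fun ω => by
    have hcos : Integrable fun z : ℝ × ℝ => p z.1 * p z.2 * cos ((z.1 - z.2) * ω) :=
      hpp.mul_bdd (c := 1) (by fun_prop) (ae_of_all _ fun z => abs_cos_le_one _)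
    have hΦω : ∀ z : ℝ × ℝ,
        Φ z ω = (p z.1 * p z.2 - p z.1 * p z.2 * cos ((z.1 - z.2) * ω)) / ω ^ 2 :=
      fun z => by rw [hΦ_def]; ring
    rw [integral_congr_ae (ae_of_all _ hΦω), integral_div, integral_sub hpp hcos,
      norm_integral_mul_exp_I_mul_sq hp, Measure.volume_eq_prod, integral_prod_mul, ← sq]
  have hΦ : Integrable (Function.uncurry Φ) ((volume : Measure (ℝ × ℝ)).prod volume) := by
    refine (integrable_prod_iff ?_).2 ⟨ae_of_all _ fun z => ?_, ?_⟩
    · rw [hΦ_def]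
      exact hpp.aestronglyMeasurable.comp_fst.mul (Measurable.aestronglyMeasurable (by fun_prop))
    · simp only [Function.uncurry_apply_pair, hΦ_def]
      exact (integrable_one_sub_cos_mul_div_sq _).const_mul _
    · refine (hq.norm.const_mul π).congr (ae_of_all _ fun z => ?_)
      simp only [Function.uncurry_apply_pair, hΦ_def, norm_mul,
        norm_of_nonneg (one_sub_cos_div_sq_nonneg _ _)]
      rw [integral_const_mul, integral_one_sub_cos_mul_div_sq, norm_abs_eq_norm]
      simp only [norm_eq_abs]
      ring
  calc π * ∫ z : ℝ × ℝ, p z.1 * p z.2 * |z.1 - z.2| = ∫ z, ∫ ω, Φ z ω := by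
        rw [← integral_const_mul]; simp_rw [inner_ω]
    _ = ∫ ω, ∫ z, Φ z ω := integral_integral_swap hΦ
    _ = _ := by simp_rw [inner_z]

lemma HasCompactSupport.mul_prod {X Y R : Type*} [TopologicalSpace X] [TopologicalSpace Y]
    [MulZeroClass R] {f : X → R} {g : Y → R} (hf : HasCompactSupport f)
    (hg : HasCompactSupport g) : HasCompactSupport fun z : X × Y => f z.1 * g z.2 := by
  refine .intro' (hf.prod hg) ((isClosed_tsupport f).prod (isClosed_tsupport g)) fun z hz => ?_
  rcases not_and_or.1 (mem_prod.not.1 hz) with h | h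
  · rw [image_eq_zero_of_notMem_tsupport h, zero_mul]
  · rw [image_eq_zero_of_notMem_tsupport h, mul_zero]

/-- For a continuous compactly supported `p : ℝ → ℝ` with `∫ p = 0`,
`∬ p(x)p(x')|x−x'| dx dx' = −∫ |p̂(ω)|² dω/(πω²)` where `p̂(ω) = ∫ p(x)e^{iωx} dx`;
in particular the left-hand side is nonpositive. -/
theorem stmt_18 (p : ℝ → ℝ) (hcont : Continuous p) (hsupp : HasCompactSupport p)
    (hzero : (∫ x, p x) = 0) :
    ((∫ x, ∫ x', p x * p x' * |x - x'|) =
      - ∫ ω : ℝ, ‖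
          (∫ x : ℝ, (p x : ℂ) * Complex.exp (Complex.I * (ω : ℂ) * (x : ℂ)))‖ ^ 2
        / (Real.pi * ω ^ 2)) ∧
    (∫ x, ∫ x', p x * p x' * |x - x'|) ≤ 0 := by
  have hq : Integrable fun z : ℝ × ℝ => p z.1 * p z.2 * |z.1 - z.2| :=
    (by fun_prop : Continuous _).integrable_of_hasCompactSupport (hsupp.mul_prod hsupp).mul_right
  have energy := pi_mul_integral_mul_mul_abs_sub (hcont.integrable_of_hasCompactSupport hsupp) hq
  rw [hzero, Measure.volume_eq_prod, integral_prod _ hq] at energy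
  have identity : (∫ x, ∫ x', p x * p x' * |x - x'|) =
      -∫ ω : ℝ, ‖∫ x : ℝ, (p x : ℂ) * Complex.exp (Complex.I * ω * x)‖ ^ 2 / (π * ω ^ 2) := by
    have hω : ∀ ω : ℝ, ‖∫ x : ℝ, (p x : ℂ) * Complex.exp (Complex.I * ω * x)‖ ^ 2 / (π * ω ^ 2)
        = -((0 ^ 2 - ‖∫ x : ℝ, (p x : ℂ) * Complex.exp (Complex.I * ω * x)‖ ^ 2) / ω ^ 2) / π :=
      fun ω => by ring
    simp_rw [hω, integral_div, integral_neg, ← energy]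
    field_simp
  exact ⟨identity, identity ▸ neg_nonpos.2 (integral_nonneg fun ω => by positivity)⟩
end

section
/- Let J : C → ℝ be differentiable on a convex closed set C ⊆ ℝ^p with L-Lipschitz gradient, and consider projected gradient descent β^{(k+1)} = Π_C(β^{(k)} − α ∇J(β^{(k)})) with step size 0 < α ≤ 1/L. Then the sequence J(β^{(k)}) is nonincreasing, and every accumulation point β^∞ of the iterates is a stationary point, i.e., ⟨∇J(β^∞), β' − β^∞⟩ ≥ 0 for all β' ∈ C. -/
/-!
For `x ∈ C`, the step `p = Π_C (x - α G x)` satisfies `⟪x - α G x - p, y - p⟫ ≤ 0` on `C`.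
With `y = x` and the descent lemma `J p ≤ J x + ⟪G x, p - x⟫ + L/2 ‖p - x‖²` this gives the
sufficient decrease `J p + ‖p - x‖² / (2α) ≤ J x`, since `αL ≤ 1`. So `J ∘ β` is antitone;
being continuous at a cluster point `z`, it converges to `J z`, which forces the steps
`β (k+1) - β k` to tend to zero. Along a subsequence tending to `z`, both `β k` and `β (k+1)`
then tend to `z`, and the variational inequality passes to the limit as `⟪G z, y - z⟫ ≥ 0`.
-/

open Filter Topology

theorem Antitone.tendsto_of_mapClusterPt {ι α : Type*} [Preorder ι] [LinearOrder α]
    [TopologicalSpace α] [OrderTopology α] {u : ι → α} {a : α} (hu : Antitone u)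
    (ha : MapClusterPt a atTop u) : Tendsto u atTop (𝓝 a) := by
  refine tendsto_order.2 ⟨fun b hb => Eventually.of_forall fun k => hb.trans_le ?_,
    fun b hb => ?_⟩
  · exact isClosed_Iic.mem_of_mapClusterPt ha
      ((eventually_ge_atTop k).mono fun i hi => hu hi)
  · obtain ⟨k, hk⟩ := (ha.frequently (Iio_mem_nhds hb)).exists
    exact (eventually_ge_atTop k).mono fun i hi => (hu hi).trans_lt hk

theorem tendsto_sub_nhds_zero_of_add_mul_sq_le {E : Type*} [SeminormedAddCommGroup E]
    {u : ℕ → E} {f : ℕ → ℝ} {a c : ℝ} (hf : Tendsto f atTop (𝓝 a)) (hc : 0 < c)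
    (h : ∀ k, f (k + 1) + c * ‖u (k + 1) - u k‖ ^ 2 ≤ f k) :
    Tendsto (fun k => u (k + 1) - u k) atTop (𝓝 0) := by
  have hdecr : Tendsto (fun k => (f k - f (k + 1)) / c) atTop (𝓝 0) := by
    simpa using (hf.sub (hf.comp (tendsto_add_atTop_nat 1))).div_const c
  have hsq : Tendsto (fun k => ‖u (k + 1) - u k‖ ^ 2) atTop (𝓝 0) :=
    squeeze_zero (fun _ => by positivity)
      (fun k => by rw [le_div_iff₀ hc]; linarith [h k]) hdecr
  rw [tendsto_zero_iff_norm_tendsto_zero]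
  simpa using hsq.sqrt

section ProjectedGradient

variable {F : Type*} [NormedAddCommGroup F] [InnerProductSpace ℝ F]

open scoped InnerProductSpace

/-- `p = Π_C (x - α • G x)`, expressed through the variational inequality that characterises
the projection onto a convex set. -/
def IsProjGradStep (C : Set F) (G : F → F) (α : ℝ) (x p : F) : Prop :=
  p ∈ C ∧ ∀ y ∈ C, ⟪x - α • G x - p, y - p⟫_ℝ ≤ 0

variable {C : Set F} {G : F → F} {α : ℝ}

theorem Convex.isProjGradStep_of_forall_norm_sub_le (hC : Convex ℝ C) {x p : F} (hp : p ∈ C)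
    (hmin : ∀ y ∈ C, ‖x - α • G x - p‖ ≤ ‖x - α • G x - y‖) : IsProjGradStep C G α x p := by
  have : Nonempty C := ⟨⟨p, hp⟩⟩
  refine ⟨hp, (norm_eq_iInf_iff_real_inner_le_zero hC hp).1 (le_antisymm ?_ ?_)⟩
  · exact le_ciInf fun y => hmin y y.2
  · refine ciInf_le ?_ (⟨p, hp⟩ : C)
    exact ⟨0, Set.forall_mem_range.2 fun _ => norm_nonneg _⟩

theorem IsProjGradStep.inner_nonneg_of_tendsto {ι : Type*} {l : Filter ι} [l.NeBot]
    {u v : ι → F} {z y : F} (hstep : ∀ i, IsProjGradStep C G α (u i) (v i)) (hα : 0 < α)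
    (hu : Tendsto u l (𝓝 z)) (hv : Tendsto v l (𝓝 z)) (hG : Tendsto (G ∘ u) l (𝓝 (G z)))
    (hy : y ∈ C) : 0 ≤ ⟪G z, y - z⟫_ℝ := by
  have hlim := ((hu.sub (hG.const_smul α)).sub hv).inner (𝕜 := ℝ)
    ((tendsto_const_nhds (x := y)).sub hv)
  have hle := le_of_tendsto hlim (Eventually.of_forall fun i => (hstep i).2 y hy)
  rw [sub_sub_cancel_left, inner_neg_left, real_inner_smul_left, neg_nonpos] at hle
  exact nonneg_of_mul_nonneg_right hle hα

variable [CompleteSpace F] {J : F → ℝ} {L : ℝ}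

theorem Convex.le_add_inner_add_sq_of_lipschitz_gradient (hC : Convex ℝ C)
    (hgrad : ∀ x ∈ C, HasGradientAt J (G x) x)
    (hLip : ∀ x ∈ C, ∀ y ∈ C, ‖G x - G y‖ ≤ L * ‖x - y‖) {x y : F} (hx : x ∈ C) (hy : y ∈ C) :
    J y ≤ J x + ⟪G x, y - x⟫_ℝ + L / 2 * ‖y - x‖ ^ 2 := by
  set d := y - x with hd
  have hseg : ∀ t ∈ Set.Icc (0 : ℝ) 1, x + t • d ∈ C := fun t ht => hC.add_smul_sub_mem hx hy ht
  have hJ : ∀ t ∈ Set.Icc (0 : ℝ) 1,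
      HasDerivAt (fun s : ℝ => J (x + s • d)) ⟪G (x + t • d), d⟫_ℝ t := by
    intro t ht
    have hline : HasDerivAt (fun s : ℝ => x + s • d) d t := by
      simpa using ((hasDerivAt_id t).smul_const d).const_add x
    have h := (hgrad _ (hseg t ht)).hasFDerivAt.comp_hasDerivAt t hline
    rw [InnerProductSpace.toDual_apply_apply] at h
    exact h
  have hB : ∀ t : ℝ, HasDerivAt (fun s : ℝ => J x + s * ⟪G x, d⟫_ℝ + L / 2 * s ^ 2 * ‖d‖ ^ 2)
      (⟪G x, d⟫_ℝ + L * t * ‖d‖ ^ 2) t := fun t =>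
    (((hasDerivAt_mul_const ⟪G x, d⟫_ℝ).const_add (J x)).add
      (((hasDerivAt_pow 2 t).const_mul (L / 2)).mul_const (‖d‖ ^ 2))).congr_deriv (by ring)
  have hbound : ∀ t ∈ Set.Ico (0 : ℝ) 1, ⟪G (x + t • d), d⟫_ℝ ≤ ⟪G x, d⟫_ℝ + L * t * ‖d‖ ^ 2 := by
    intro t ht
    have hlip := hLip _ (hseg t (Set.Ico_subset_Icc_self ht)) x hx
    rw [add_sub_cancel_left, norm_smul, Real.norm_of_nonneg ht.1] at hlip
    calc ⟪G (x + t • d), d⟫_ℝ = ⟪G x, d⟫_ℝ + ⟪G (x + t • d) - G x, d⟫_ℝ := by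
          rw [inner_sub_left]; ring
      _ ≤ ⟪G x, d⟫_ℝ + ‖G (x + t • d) - G x‖ * ‖d‖ := by gcongr; exact real_inner_le_norm _ _
      _ ≤ ⟪G x, d⟫_ℝ + L * (t * ‖d‖) * ‖d‖ := by gcongr
      _ = ⟪G x, d⟫_ℝ + L * t * ‖d‖ ^ 2 := by ring
  have hcomp := image_le_of_deriv_right_le_deriv_boundary
    (fun t ht => (hJ t ht).continuousAt.continuousWithinAt)
    (fun t ht => (hJ t (Set.Ico_subset_Icc_self ht)).hasDerivWithinAt) (by simp)
    (fun t _ => (hB t).continuousAt.continuousWithinAt) (fun t _ => (hB t).hasDerivWithinAt)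
    hbound (Set.right_mem_Icc.2 zero_le_one)
  simpa [hd] using hcomp

theorem IsProjGradStep.apply_add_sq_le (hC : Convex ℝ C)
    (hgrad : ∀ x ∈ C, HasGradientAt J (G x) x)
    (hLip : ∀ x ∈ C, ∀ y ∈ C, ‖G x - G y‖ ≤ L * ‖x - y‖) (hα : 0 < α) (hαL : α * L ≤ 1)
    {x p : F} (hx : x ∈ C) (hstep : IsProjGradStep C G α x p) :
    J p + (2 * α)⁻¹ * ‖p - x‖ ^ 2 ≤ J x := by
  have hdesc := hC.le_add_inner_add_sq_of_lipschitz_gradient hgrad hLip hx hstep.1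
  have hvi := hstep.2 x hx
  rw [show x - α • G x - p = -((p - x) + α • G x) by abel, show x - p = -(p - x) by abel,
    inner_neg_neg, inner_add_left, real_inner_self_eq_norm_sq, real_inner_smul_left] at hvi
  have hsq : α * L * ‖p - x‖ ^ 2 ≤ ‖p - x‖ ^ 2 :=
    mul_le_of_le_one_left (sq_nonneg _) hαL
  rw [← mul_le_mul_iff_of_pos_left (by positivity : 0 < 2 * α)]
  field_simp
  nlinarith

end ProjectedGradient

theorem stmt_19_general {n : ℕ} (C : Set (EuclideanSpace ℝ (Fin n)))
    (hCconv : Convex ℝ C) (hCclosed : IsClosed C)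
    (J : EuclideanSpace ℝ (Fin n) → ℝ)
    (G : EuclideanSpace ℝ (Fin n) → EuclideanSpace ℝ (Fin n))
    (hgrad : ∀ x ∈ C, HasGradientAt J (G x) x)
    (L : ℝ) (hL : 0 < L)
    (hLip : ∀ x ∈ C, ∀ y ∈ C, ‖G x - G y‖ ≤ L * ‖x - y‖)
    (proj : EuclideanSpace ℝ (Fin n) → EuclideanSpace ℝ (Fin n))
    (hprojmem : ∀ x, proj x ∈ C)
    (hprojmin : ∀ x, ∀ y ∈ C, ‖x - proj x‖ ≤ ‖x - y‖)
    (α : ℝ) (hα : 0 < α) (hα' : α ≤ 1 / L)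
    (β : ℕ → EuclideanSpace ℝ (Fin n)) (hβ0 : β 0 ∈ C)
    (hiter : ∀ k, β (k + 1) = proj (β k - α • G (β k))) :
    (∀ k, J (β (k + 1)) ≤ J (β k)) ∧
    (∀ βinf, MapClusterPt βinf atTop β →
      ∀ β' ∈ C, 0 ≤ (inner ℝ (G βinf) (β' - βinf) : ℝ)) := by
  have hαL : α * L ≤ 1 := (le_div_iff₀ hL).1 hα'
  have hstep (k : ℕ) : IsProjGradStep C G α (β k) (β (k + 1)) := by
    rw [hiter k]
    exact hCconv.isProjGradStep_of_forall_norm_sub_le (hprojmem _) (hprojmin _)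
  have hmem : ∀ k, β k ∈ C
    | 0 => hβ0
    | k + 1 => (hstep k).1
  have hdecr (k : ℕ) : J (β (k + 1)) + (2 * α)⁻¹ * ‖β (k + 1) - β k‖ ^ 2 ≤ J (β k) :=
    (hstep k).apply_add_sq_le hCconv hgrad hLip hα hαL (hmem k)
  have hanti : Antitone (J ∘ β) := antitone_nat_of_succ_le fun k =>
    (le_add_of_nonneg_right (by positivity)).trans (hdecr k)
  refine ⟨fun k => hanti k.le_succ, fun z hz y hy => ?_⟩
  have hzC : z ∈ C := hCclosed.mem_of_mapClusterPt hz (Eventually.of_forall hmem)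
  have hJ := hanti.tendsto_of_mapClusterPt
    (hz.continuousAt_comp (hgrad z hzC).differentiableAt.continuousAt)
  have hsteps := tendsto_sub_nhds_zero_of_add_mul_sq_le hJ (by positivity) hdecr
  obtain ⟨ψ, hψ, hψz⟩ := hz.tendsto_subseq
  have hG : Tendsto (G ∘ β ∘ ψ) atTop (𝓝 (G z)) :=
    tendsto_iff_norm_sub_tendsto_zero.2 <| squeeze_zero (fun _ => norm_nonneg _)
      (fun j => hLip _ (hmem _) z hzC)
      (by simpa using (tendsto_iff_norm_sub_tendsto_zero.1 hψz).const_mul L)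
  exact IsProjGradStep.inner_nonneg_of_tendsto (fun j => hstep (ψ j)) hα hψz
    (by simpa using (hsteps.comp hψ.tendsto_atTop).add hψz) hG hy

/-- Projected gradient descent on a closed convex set `C` with step size `α ≤ 1/L`, where the
gradient `G` of `J` is `L`-Lipschitz on `C`: the objective values are nonincreasing, and
every accumulation point `β∞` of the iterates is stationary, i.e.
`⟨G(β∞), β' − β∞⟩ ≥ 0` for all `β' ∈ C`. -/
theorem stmt_19 {n : ℕ} (C : Set (EuclideanSpace ℝ (Fin n)))
    (hCconv : Convex ℝ C) (hCclosed : IsClosed C) (hCne : C.Nonempty)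
    (J : EuclideanSpace ℝ (Fin n) → ℝ)
    (G : EuclideanSpace ℝ (Fin n) → EuclideanSpace ℝ (Fin n))
    (hgrad : ∀ x ∈ C, HasGradientAt J (G x) x)
    (L : ℝ) (hL : 0 < L)
    (hLip : ∀ x ∈ C, ∀ y ∈ C, ‖G x - G y‖ ≤ L * ‖x - y‖)
    (proj : EuclideanSpace ℝ (Fin n) → EuclideanSpace ℝ (Fin n))
    (hprojmem : ∀ x, proj x ∈ C)
    (hprojmin : ∀ x, ∀ y ∈ C, ‖x - proj x‖ ≤ ‖x - y‖)
    (α : ℝ) (hα : 0 < α) (hα' : α ≤ 1 / L)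
    (β : ℕ → EuclideanSpace ℝ (Fin n)) (hβ0 : β 0 ∈ C)
    (hiter : ∀ k, β (k + 1) = proj (β k - α • G (β k))) :
    (∀ k, J (β (k + 1)) ≤ J (β k)) ∧
    (∀ βinf, MapClusterPt βinf atTop β →
      ∀ β' ∈ C, 0 ≤ (inner ℝ (G βinf) (β' - βinf) : ℝ)) :=
  stmt_19_general C hCconv hCclosed J G hgrad L hL hLip proj hprojmem hprojmin α hα hα' β hβ0 hiter
end
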